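/- arXiv:1005.1409 — 3 statements merged into one kernel-verified Lean document; each statement's English description precedes it below -/
import Mathlib

section
/- Let n ≥ 1 and let K and L be nonempty compact convex subsets of ℝⁿ. If c ∈ ℝ is such that (vol(K + εL) − vol(K))/ε → c as ε → 0⁺, then cⁿ ≥ nⁿ · vol(K)^{n−1} · vol(L). -/
/-!
Brunn–Minkowski gives `vol(K + εL) ≥ (a + ε b)ⁿ` with `a = vol(K)^{1/n}`, `b = vol(L)^{1/n}`,
and Bernoulli's inequality `(a + ε b)ⁿ ≥ aⁿ + n aⁿ⁻¹ ε b` then shows `c ≥ n aⁿ⁻¹ b` in the limit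
`ε → 0⁺`; the `n`-th power of this is the claim.

Brunn–Minkowski is the case of indicator functions of the Prékopa–Leindler inequality
`(∫ f)^{1-t} (∫ g)^t ≤ ∫ h` whenever `f(x)^{1-t} g(y)^t ≤ h((1-t)x + ty)`. That inequality passes
to products by Fubini, and on `ℝ` it follows from the one-dimensional Brunn–Minkowski inequality
`|A| + |B| ≤ |A + B|` applied to the superlevel sets of `f` and `g` (normalised to have supremum
`1`), integrated over the level and combined with the weighted AM–GM inequality.
-/

open MeasureTheory Pointwise Set Filter Topology
open scoped ENNReal

theorem antitone_measure_ofReal_lt {α : Type*} [MeasurableSpace α] (μ : Measure α)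
    (f : α → ℝ≥0∞) : Antitone fun s : ℝ => μ {x | ENNReal.ofReal s < f x} :=
  fun _ _ hst => measure_mono fun _ hx => (ENNReal.ofReal_le_ofReal hst).trans_lt hx

theorem lintegral_eq_lintegral_measure_ofReal_lt {α : Type*} [MeasurableSpace α] (μ : Measure α)
    {f : α → ℝ≥0∞} (hf : Measurable f) (hfin : ∀ x, f x ≠ ∞) :
    ∫⁻ x, f x ∂μ = ∫⁻ s in Ioi 0, μ {x | ENNReal.ofReal s < f x} := by
  calc ∫⁻ x, f x ∂μ = ∫⁻ x, ENNReal.ofReal (f x).toReal ∂μ := by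
        simp only [ENNReal.ofReal_toReal (hfin _)]
    _ = ∫⁻ s in Ioi 0, μ {x | s < (f x).toReal} :=
        lintegral_eq_lintegral_meas_lt μ (ae_of_all _ fun _ => ENNReal.toReal_nonneg)
          hf.ennreal_toReal.aemeasurable
    _ = ∫⁻ s in Ioi 0, μ {x | ENNReal.ofReal s < f x} := by
        refine setLIntegral_congr_fun measurableSet_Ioi fun s hs => ?_
        simp only [ENNReal.ofReal_lt_iff_lt_toReal (le_of_lt hs) (hfin _)]

theorem tendsto_lintegral_min_natCast {α : Type*} [MeasurableSpace α] (μ : Measure α)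
    {f : α → ℝ≥0∞} (hf : Measurable f) :
    Tendsto (fun k : ℕ => ∫⁻ x, min (f x) k ∂μ) atTop (𝓝 (∫⁻ x, f x ∂μ)) :=
  lintegral_tendsto_of_tendsto_of_monotone (fun _ => (hf.min measurable_const).aemeasurable)
    (ae_of_all _ fun _ _ _ hjk => min_le_min_left _ (Nat.cast_le.2 hjk))
    (ae_of_all _ fun x => by
      simpa using tendsto_const_nhds.min ENNReal.tendsto_nat_nhds_top)

theorem iSup_min_natCast_ne_zero {α : Type*} {f : α → ℝ≥0∞} (hf : f ≠ 0) {k : ℕ} (hk : k ≠ 0) :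
    ⨆ x, min (f x) k ≠ 0 := by
  simpa [ENNReal.iSup_eq_zero, hk, funext_iff] using hf

theorem iSup_min_natCast_ne_top {α : Type*} (f : α → ℝ≥0∞) (k : ℕ) : ⨆ x, min (f x) k ≠ ∞ :=
  ne_top_of_le_ne_top (ENNReal.natCast_ne_top k) (iSup_le fun _ => min_le_right _ _)

theorem ENNReal.rpow_one_sub_mul_rpow_le {t : ℝ} (ht0 : 0 < t) (ht1 : t < 1) (a b : ℝ≥0∞) :
    a ^ (1 - t) * b ^ t ≤ ENNReal.ofReal (1 - t) * a + ENNReal.ofReal t * b := by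
  have h1t : 0 < 1 - t := by linarith
  have hpq : (1 - t)⁻¹.HolderConjugate t⁻¹ := Real.HolderConjugate.inv_inv h1t ht0 (by ring)
  have key := ENNReal.young_inequality (a ^ (1 - t)) (b ^ t) hpq
  rwa [← ENNReal.rpow_mul, ← ENNReal.rpow_mul, mul_inv_cancel₀ h1t.ne', mul_inv_cancel₀ ht0.ne',
    ENNReal.rpow_one, ENNReal.rpow_one, div_eq_mul_inv, div_eq_mul_inv,
    ← ENNReal.ofReal_inv_of_pos (inv_pos.2 h1t), ← ENNReal.ofReal_inv_of_pos (inv_pos.2 ht0),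
    inv_inv, inv_inv, mul_comm a, mul_comm b] at key

namespace Real

theorem volume_add_volume_le_volume_add {A B : Set ℝ} (hA : IsCompact A) (hB : IsCompact B)
    (hAne : A.Nonempty) (hBne : B.Nonempty) :
    volume A + volume B ≤ volume (A + B) := by
  set a := sSup A
  set b := sInf B
  have haA : a ∈ A := hA.sSup_mem hAne
  have hbB : b ∈ B := hB.sInf_mem hBne
  have hunion : (b +ᵥ A) ∪ (a +ᵥ B) ⊆ A + B :=
    union_subset (add_comm A B ▸ vadd_set_subset_add hbB) (vadd_set_subset_add haA)
  -- the left translate ends at `a + b`, where the right one starts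
  have hinter : (b +ᵥ A) ∩ (a +ᵥ B) ⊆ {a + b} := by
    rintro _ ⟨⟨x, hx, rfl⟩, ⟨y, hy, hxy⟩⟩
    have hxa : x ≤ a := le_csSup hA.bddAbove hx
    have hby : b ≤ y := csInf_le hB.bddBelow hy
    simp only [vadd_eq_add, mem_singleton_iff] at hxy ⊢
    linarith
  calc volume A + volume B = volume (b +ᵥ A) + volume (a +ᵥ B) := by
        rw [measure_vadd, measure_vadd]
    _ = volume ((b +ᵥ A) ∪ (a +ᵥ B)) + volume ((b +ᵥ A) ∩ (a +ᵥ B)) :=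
        (measure_union_add_inter _ (hB.vadd a).measurableSet).symm
    _ ≤ volume (A + B) + volume ({a + b} : Set ℝ) := by gcongr
    _ = volume (A + B) := by rw [Real.volume_singleton, add_zero]

theorem volume_add_volume_le_of_add_subset {A B C : Set ℝ} (hA : MeasurableSet A)
    (hB : MeasurableSet B) (hAne : A.Nonempty) (hBne : B.Nonempty) (hC : A + B ⊆ C) :
    volume A + volume B ≤ volume C := by
  obtain ⟨a, haA⟩ := hAne
  obtain ⟨b, hbB⟩ := hBne
  rw [hA.measure_eq_iSup_isCompact, hB.measure_eq_iSup_isCompact]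
  simp only [iSup_and']
  refine ENNReal.biSup_add_biSup_le' ⟨∅, empty_subset _, isCompact_empty⟩
    ⟨∅, empty_subset _, isCompact_empty⟩ fun K ⟨hKA, hK⟩ K' ⟨hK'B, hK'⟩ => ?_
  calc volume K + volume K' ≤ volume (insert a K) + volume (insert b K') := by
        gcongr <;> exact subset_insert _ _
    _ ≤ volume (insert a K + insert b K') :=
        volume_add_volume_le_volume_add (hK.insert a) (hK'.insert b)
          (insert_nonempty _ _) (insert_nonempty _ _)
    _ ≤ volume C := measure_mono <| (add_subset_add (insert_subset haA hKA)
          (insert_subset hbB hK'B)).trans hC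

theorem add_lintegral_le_lintegral_of_iSup_eq_one {t : ℝ} (ht0 : 0 < t) (ht1 : t < 1)
    {f g h : ℝ → ℝ≥0∞} (hf : Measurable f) (hg : Measurable g) (hh : Measurable h)
    (hf1 : ⨆ x, f x = 1) (hg1 : ⨆ y, g y = 1)
    (hfgh : ∀ x y, f x ^ (1 - t) * g y ^ t ≤ h ((1 - t) * x + t * y)) :
    ENNReal.ofReal (1 - t) * (∫⁻ x, f x) + ENNReal.ofReal t * ∫⁻ y, g y ≤ ∫⁻ z, h z := by
  have h1t : 0 < 1 - t := by linarith
  have hfle : ∀ x, f x ≤ 1 := fun x => hf1 ▸ le_iSup f x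
  have hgle : ∀ y, g y ≤ 1 := fun y => hg1 ▸ le_iSup g y
  -- truncating `h` at `1` keeps it finite for the layer-cake formula and keeps its level sets
  -- below `1`, the only ones that matter since `f, g ≤ 1`
  have hlevel : ∀ s ∈ Ioi (0 : ℝ),
      ENNReal.ofReal (1 - t) * volume {x | ENNReal.ofReal s < f x}
        + ENNReal.ofReal t * volume {y | ENNReal.ofReal s < g y}
      ≤ volume {z | ENNReal.ofReal s < min (h z) 1} := by
    intro s hs
    by_cases hs1 : s < 1
    · have hs1' : ENNReal.ofReal s < 1 := ENNReal.ofReal_lt_one.2 hs1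
      have hF : {x | ENNReal.ofReal s < f x}.Nonempty := lt_iSup_iff.1 (hf1 ▸ hs1' :)
      have hG : {y | ENNReal.ofReal s < g y}.Nonempty := lt_iSup_iff.1 (hg1 ▸ hs1' :)
      have hsub : (1 - t) • {x | ENNReal.ofReal s < f x} + t • {y | ENNReal.ofReal s < g y}
          ⊆ {z | ENNReal.ofReal s < min (h z) 1} := by
        rintro _ ⟨_, ⟨x, hx, rfl⟩, _, ⟨y, hy, rfl⟩, rfl⟩
        refine lt_min ?_ hs1'
        calc ENNReal.ofReal s = ENNReal.ofReal s ^ (1 - t) * ENNReal.ofReal s ^ t := by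
              rw [← ENNReal.rpow_add _ _ (by simpa using hs) ENNReal.ofReal_ne_top,
                sub_add_cancel, ENNReal.rpow_one]
          _ < f x ^ (1 - t) * g y ^ t :=
              ENNReal.mul_lt_mul (ENNReal.rpow_lt_rpow hx h1t) (ENNReal.rpow_lt_rpow hy ht0)
          _ ≤ h ((1 - t) * x + t * y) := hfgh x y
      have hmeas : ∀ {φ : ℝ → ℝ≥0∞}, Measurable φ →
          MeasurableSet {x | ENNReal.ofReal s < φ x} :=
        fun hφ => measurableSet_lt measurable_const hφ
      have hBM := volume_add_volume_le_of_add_subset ((hmeas hf).const_smul₀ _)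
        ((hmeas hg).const_smul₀ _) hF.smul_set hG.smul_set hsub
      rwa [Measure.addHaar_smul_of_nonneg _ h1t.le, Measure.addHaar_smul_of_nonneg _ ht0.le,
        Module.finrank_self, pow_one, pow_one] at hBM
    · have hempty : ∀ {φ : ℝ → ℝ≥0∞}, (∀ x, φ x ≤ 1) → {x | ENNReal.ofReal s < φ x} = ∅ :=
        fun hφ => eq_empty_of_forall_notMem fun x hx =>
          (hx.trans_le (hφ x)).not_ge (ENNReal.one_le_ofReal.2 (not_lt.1 hs1))
      simp [hempty hfle, hempty hgle]
  have hmin_fin : ∀ z, min (h z) 1 ≠ ∞ :=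
    fun z => ne_top_of_le_ne_top ENNReal.one_ne_top (min_le_right _ _)
  calc ENNReal.ofReal (1 - t) * (∫⁻ x, f x) + ENNReal.ofReal t * ∫⁻ y, g y
      = ∫⁻ s in Ioi 0, (ENNReal.ofReal (1 - t) * volume {x | ENNReal.ofReal s < f x}
          + ENNReal.ofReal t * volume {y | ENNReal.ofReal s < g y}) := by
        rw [lintegral_add_left ((antitone_measure_ofReal_lt _ f).measurable.const_mul _),
          lintegral_const_mul _ (antitone_measure_ofReal_lt _ f).measurable,
          lintegral_const_mul _ (antitone_measure_ofReal_lt _ g).measurable,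
          ← lintegral_eq_lintegral_measure_ofReal_lt _ hf fun x => ne_top_of_le_ne_top
            ENNReal.one_ne_top (hfle x),
          ← lintegral_eq_lintegral_measure_ofReal_lt _ hg fun y => ne_top_of_le_ne_top
            ENNReal.one_ne_top (hgle y)]
    _ ≤ ∫⁻ s in Ioi 0, volume {z | ENNReal.ofReal s < min (h z) 1} :=
        setLIntegral_mono (antitone_measure_ofReal_lt _ _).measurable hlevel
    _ = ∫⁻ z, min (h z) 1 :=
        (lintegral_eq_lintegral_measure_ofReal_lt _ (hh.min measurable_const) hmin_fin).symm
    _ ≤ ∫⁻ z, h z := lintegral_mono fun z => min_le_left _ _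

theorem lintegral_rpow_mul_lintegral_rpow_le_of_iSup_ne_top {t : ℝ} (ht0 : 0 < t) (ht1 : t < 1)
    {f g h : ℝ → ℝ≥0∞} (hf : Measurable f) (hg : Measurable g) (hh : Measurable h)
    (hf0 : ⨆ x, f x ≠ 0) (hftop : ⨆ x, f x ≠ ∞) (hg0 : ⨆ y, g y ≠ 0) (hgtop : ⨆ y, g y ≠ ∞)
    (hfgh : ∀ x y, f x ^ (1 - t) * g y ^ t ≤ h ((1 - t) * x + t * y)) :
    (∫⁻ x, f x) ^ (1 - t) * (∫⁻ y, g y) ^ t ≤ ∫⁻ z, h z := by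
  have h1t : 0 < 1 - t := by linarith
  set a := ⨆ x, f x
  set b := ⨆ y, g y
  set m := a ^ (1 - t) * b ^ t
  have hm0 : m ≠ 0 := mul_ne_zero (ENNReal.rpow_pos (pos_iff_ne_zero.2 hf0) hftop).ne'
    (ENNReal.rpow_pos (pos_iff_ne_zero.2 hg0) hgtop).ne'
  have hmtop : m ≠ ∞ := ENNReal.mul_ne_top (ENNReal.rpow_ne_top_of_nonneg h1t.le hftop)
    (ENNReal.rpow_ne_top_of_nonneg ht0.le hgtop)
  have hscale : ∀ u v : ℝ≥0∞,
      (a⁻¹ * u) ^ (1 - t) * (b⁻¹ * v) ^ t = m⁻¹ * (u ^ (1 - t) * v ^ t) := by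
    intro u v
    rw [ENNReal.mul_rpow_of_nonneg _ _ h1t.le, ENNReal.mul_rpow_of_nonneg _ _ ht0.le,
      ENNReal.inv_rpow, ENNReal.inv_rpow, ENNReal.mul_inv
        (Or.inr (ENNReal.rpow_ne_top_of_nonneg ht0.le hgtop))
        (Or.inl (ENNReal.rpow_ne_top_of_nonneg h1t.le hftop))]
    ring
  have hnormalized := add_lintegral_le_lintegral_of_iSup_eq_one ht0 ht1 (hf.const_mul a⁻¹)
    (hg.const_mul b⁻¹) (hh.const_mul m⁻¹)
    (by rw [← ENNReal.mul_iSup, ENNReal.inv_mul_cancel hf0 hftop])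
    (by rw [← ENNReal.mul_iSup, ENNReal.inv_mul_cancel hg0 hgtop])
    (fun x y => by rw [hscale]; gcongr; exact hfgh x y)
  rw [lintegral_const_mul _ hf, lintegral_const_mul _ hg, lintegral_const_mul _ hh] at hnormalized
  calc (∫⁻ x, f x) ^ (1 - t) * (∫⁻ y, g y) ^ t
      = m * ((a⁻¹ * ∫⁻ x, f x) ^ (1 - t) * (b⁻¹ * ∫⁻ y, g y) ^ t) := by
        rw [hscale, ENNReal.mul_inv_cancel_left hm0 hmtop]
    _ ≤ m * (ENNReal.ofReal (1 - t) * (a⁻¹ * ∫⁻ x, f x)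
          + ENNReal.ofReal t * (b⁻¹ * ∫⁻ y, g y)) := by
        gcongr; exact ENNReal.rpow_one_sub_mul_rpow_le ht0 ht1 _ _
    _ ≤ m * (m⁻¹ * ∫⁻ z, h z) := by gcongr
    _ = ∫⁻ z, h z := ENNReal.mul_inv_cancel_left hm0 hmtop

end Real

def PrekopaLeindler {E : Type*} [AddCommGroup E] [Module ℝ E] [MeasurableSpace E]
    (μ : Measure E) : Prop :=
  ∀ ⦃t : ℝ⦄, 0 < t → t < 1 → ∀ ⦃f g h : E → ℝ≥0∞⦄, Measurable f → Measurable g → Measurable h →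
    (∀ x y, f x ^ (1 - t) * g y ^ t ≤ h ((1 - t) • x + t • y)) →
    (∫⁻ x, f x ∂μ) ^ (1 - t) * (∫⁻ y, g y ∂μ) ^ t ≤ ∫⁻ z, h z ∂μ

theorem prekopaLeindler_volume_real : PrekopaLeindler (volume : Measure ℝ) := by
  intro t ht0 ht1 f g h hf hg hh hfgh
  have h1t : 0 < 1 - t := by linarith
  rcases eq_or_ne (∫⁻ x, f x) 0 with hf0 | hf0
  · rw [hf0, ENNReal.zero_rpow_of_pos h1t, zero_mul]; exact zero_le
  rcases eq_or_ne (∫⁻ y, g y) 0 with hg0 | hg0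
  · rw [hg0, ENNReal.zero_rpow_of_pos ht0, mul_zero]; exact zero_le
  -- truncation at `k` makes the suprema finite; monotone convergence then lets `k → ∞`
  have htruncated : ∀ᶠ k : ℕ in atTop,
      (∫⁻ x, min (f x) k) ^ (1 - t) * (∫⁻ y, min (g y) k) ^ t ≤ ∫⁻ z, h z := by
    filter_upwards [eventually_ne_atTop 0] with k hk
    refine Real.lintegral_rpow_mul_lintegral_rpow_le_of_iSup_ne_top ht0 ht1
      (hf.min measurable_const) (hg.min measurable_const) hh
      (iSup_min_natCast_ne_zero (by rintro rfl; simp at hf0) hk) (iSup_min_natCast_ne_top f k)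
      (iSup_min_natCast_ne_zero (by rintro rfl; simp at hg0) hk) (iSup_min_natCast_ne_top g k)
      fun x y => ?_
    calc min (f x) k ^ (1 - t) * min (g y) k ^ t ≤ f x ^ (1 - t) * g y ^ t := by
          gcongr <;> exact min_le_left _ _
      _ ≤ h ((1 - t) * x + t * y) := hfgh x y
  refine le_of_tendsto (ENNReal.Tendsto.mul
    ((ENNReal.continuous_rpow_const.tendsto _).comp (tendsto_lintegral_min_natCast _ hf))
    (Or.inl ?_)
    ((ENNReal.continuous_rpow_const.tendsto _).comp (tendsto_lintegral_min_natCast _ hg))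
    (Or.inl ?_)) htruncated
  · simp [ENNReal.rpow_eq_zero_iff, hf0, h1t.not_gt]
  · simp [ENNReal.rpow_eq_zero_iff, hg0, ht0.not_gt]

namespace PrekopaLeindler

variable {E F : Type*} [AddCommGroup E] [Module ℝ E] [MeasurableSpace E]
  [AddCommGroup F] [Module ℝ F] [MeasurableSpace F] {μ : Measure E} {ν : Measure F}

theorem of_measurePreserving (hμ : PrekopaLeindler μ) (e : E →ₗ[ℝ] F)
    (he : MeasurePreserving e μ ν) : PrekopaLeindler ν := by
  intro t ht0 ht1 f g h hf hg hh hfgh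
  rw [← he.lintegral_comp hf, ← he.lintegral_comp hg, ← he.lintegral_comp hh]
  refine hμ ht0 ht1 (hf.comp he.measurable) (hg.comp he.measurable) (hh.comp he.measurable)
    fun x y => ?_
  simpa only [Function.comp_apply, map_add, map_smul] using hfgh (e x) (e y)

theorem prod [SFinite ν] (hμ : PrekopaLeindler μ) (hν : PrekopaLeindler ν) :
    PrekopaLeindler (μ.prod ν) := by
  intro t ht0 ht1 f g h hf hg hh hfgh
  rw [lintegral_prod f hf.aemeasurable, lintegral_prod g hg.aemeasurable,
    lintegral_prod h hh.aemeasurable]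
  refine hμ ht0 ht1 hf.lintegral_prod_right' hg.lintegral_prod_right' hh.lintegral_prod_right'
    fun x₁ y₁ => ?_
  exact hν ht0 ht1 (hf.comp measurable_prodMk_left) (hg.comp measurable_prodMk_left)
    (hh.comp measurable_prodMk_left) fun x₂ y₂ => hfgh (x₁, x₂) (y₁, y₂)

theorem measure_rpow_mul_measure_rpow_le (hμ : PrekopaLeindler μ) {t : ℝ} (ht0 : 0 < t)
    (ht1 : t < 1) {A B C : Set E} (hA : MeasurableSet A) (hB : MeasurableSet B)
    (hC : MeasurableSet C) (hABC : (1 - t) • A + t • B ⊆ C) :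
    μ A ^ (1 - t) * μ B ^ t ≤ μ C := by
  have h1t : 0 < 1 - t := by linarith
  have hind : ∀ x y, A.indicator 1 x ^ (1 - t) * B.indicator 1 y ^ t
      ≤ C.indicator (1 : E → ℝ≥0∞) ((1 - t) • x + t • y) := by
    intro x y
    by_cases hx : x ∈ A
    · by_cases hy : y ∈ B
      · have : (1 - t) • x + t • y ∈ C := hABC (add_mem_add (smul_mem_smul_set hx)
          (smul_mem_smul_set hy))
        simp [hx, hy, this]
      · simp [hy, ENNReal.zero_rpow_of_pos ht0]
    · simp [hx, ENNReal.zero_rpow_of_pos h1t]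
  simpa [lintegral_indicator_one hA, lintegral_indicator_one hB, lintegral_indicator_one hC]
    using hμ ht0 ht1 (measurable_one.indicator hA) (measurable_one.indicator hB)
      (measurable_one.indicator hC) hind

end PrekopaLeindler

theorem measure_le_of_add_subset {G : Type*} [AddCommGroup G] [MeasurableSpace G]
    [MeasurableAdd G] {μ : Measure G} [μ.IsAddLeftInvariant] {A B C : Set G} (hB : B.Nonempty)
    (hABC : A + B ⊆ C) : μ A ≤ μ C := by
  obtain ⟨y, hy⟩ := hB
  rw [← measure_vadd μ y A]
  exact measure_mono ((add_comm A B ▸ vadd_set_subset_add hy).trans hABC)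

section BrunnMinkowski

variable {E : Type*} [NormedAddCommGroup E] [NormedSpace ℝ E] [MeasurableSpace E] [BorelSpace E]
  [FiniteDimensional ℝ E] {μ : Measure E} [μ.IsAddHaarMeasure]

theorem PrekopaLeindler.ofReal_add_pow_le (hμ : PrekopaLeindler μ) {A B C : Set E}
    (hA : MeasurableSet A) (hB : MeasurableSet B) (hC : MeasurableSet C) (hABC : A + B ⊆ C)
    {a b : ℝ} (ha : 0 < a) (hb : 0 < b) (hμA : μ A = ENNReal.ofReal (a ^ Module.finrank ℝ E))
    (hμB : μ B = ENNReal.ofReal (b ^ Module.finrank ℝ E)) :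
    ENNReal.ofReal ((a + b) ^ Module.finrank ℝ E) ≤ μ C := by
  set d := Module.finrank ℝ E
  -- with `t = b / (a + b)`, `A` and `B` are the shares `1 - t` and `t` of two rescaled sets of
  -- volume `(a + b) ^ d`
  have ht0 : 0 < b / (a + b) := by positivity
  have ht1 : b / (a + b) < 1 := (div_lt_one (by positivity)).2 (by linarith)
  have hscaled : ∀ {S : Set E} {x : ℝ}, 0 < x → μ S = ENNReal.ofReal (x ^ d) →
      μ (((a + b) / x) • S) = ENNReal.ofReal ((a + b) ^ d) := by
    intro S x hx hS
    rw [Measure.addHaar_smul_of_nonneg _ (by positivity), hS, ← ENNReal.ofReal_mul (by positivity),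
      ← mul_pow, div_mul_cancel₀ _ hx.ne']
  have hrescale : ∀ {S : Set E} {s x : ℝ}, s * ((a + b) / x) = 1 →
      s • ((a + b) / x) • S = S := fun hsx => by rw [smul_smul, hsx, one_smul]
  have hPL := hμ.measure_rpow_mul_measure_rpow_le ht0 ht1 (hA.const_smul₀ ((a + b) / a))
    (hB.const_smul₀ ((a + b) / b)) hC (by
      rwa [hrescale (by field_simp; ring), hrescale (by field_simp)])
  have hsum_pos : ENNReal.ofReal ((a + b) ^ d) ≠ 0 := by
    rw [ne_eq, ENNReal.ofReal_eq_zero, not_le]; positivity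
  rwa [hscaled ha hμA, hscaled hb hμB, ← ENNReal.rpow_add _ _ hsum_pos ENNReal.ofReal_ne_top,
    sub_add_cancel, ENNReal.rpow_one] at hPL

theorem PrekopaLeindler.brunn_minkowski [Nontrivial E] (hμ : PrekopaLeindler μ) {A B C : Set E}
    (hA : MeasurableSet A) (hB : MeasurableSet B) (hAne : A.Nonempty) (hBne : B.Nonempty)
    (hC : MeasurableSet C) (hCfin : μ C ≠ ∞) (hABC : A + B ⊆ C) :
    ((μ A).toReal ^ (Module.finrank ℝ E : ℝ)⁻¹ + (μ B).toReal ^ (Module.finrank ℝ E : ℝ)⁻¹)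
      ^ Module.finrank ℝ E ≤ (μ C).toReal := by
  set d := Module.finrank ℝ E
  have hd : d ≠ 0 := Module.finrank_pos.ne'
  have hAC : μ A ≤ μ C := measure_le_of_add_subset hBne hABC
  have hBC : μ B ≤ μ C := measure_le_of_add_subset hAne (add_comm A B ▸ hABC)
  set a := (μ A).toReal ^ (d : ℝ)⁻¹
  set b := (μ B).toReal ^ (d : ℝ)⁻¹
  have ha_pow : a ^ d = (μ A).toReal := Real.rpow_inv_natCast_pow ENNReal.toReal_nonneg hd
  have hb_pow : b ^ d = (μ B).toReal := Real.rpow_inv_natCast_pow ENNReal.toReal_nonneg hd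
  have ha0 : 0 ≤ a := Real.rpow_nonneg ENNReal.toReal_nonneg _
  have hb0 : 0 ≤ b := Real.rpow_nonneg ENNReal.toReal_nonneg _
  rcases ha0.eq_or_lt with ha | ha
  · rw [← ha, zero_add, hb_pow]
    exact ENNReal.toReal_mono hCfin hBC
  rcases hb0.eq_or_lt with hb | hb
  · rw [← hb, add_zero, ha_pow]
    exact ENNReal.toReal_mono hCfin hAC
  have hsum := hμ.ofReal_add_pow_le hA hB hC hABC ha hb
    (by rw [ha_pow, ENNReal.ofReal_toReal (ne_top_of_le_ne_top hCfin hAC)])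
    (by rw [hb_pow, ENNReal.ofReal_toReal (ne_top_of_le_ne_top hCfin hBC)])
  rwa [← ENNReal.toReal_ofReal (by positivity : (0 : ℝ) ≤ (a + b) ^ d),
    ENNReal.toReal_le_toReal ENNReal.ofReal_ne_top hCfin]

end BrunnMinkowski

theorem prekopaLeindler_volume_pi (n : ℕ) : PrekopaLeindler (volume : Measure (Fin n → ℝ)) := by
  induction n with
  | zero =>
    intro t ht0 ht1 f g h hf hg hh hfgh
    have hunit : (volume : Measure (Fin 0 → ℝ)) univ = 1 := by simp [volume_pi]
    rw [lintegral_unique, lintegral_unique, lintegral_unique, hunit, mul_one, mul_one, mul_one]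
    convert hfgh default default using 4
  | succ n ih =>
    refine (prekopaLeindler_volume_real.prod ih).of_measurePreserving
      (Fin.consLinearEquiv ℝ fun _ => ℝ).toLinearMap ?_
    have hcons : ⇑(Fin.consLinearEquiv ℝ fun _ : Fin (n + 1) => ℝ)
        = (MeasurableEquiv.piFinSuccAbove (fun _ : Fin (n + 1) => ℝ) 0).symm := by
      funext p
      simp only [MeasurableEquiv.piFinSuccAbove_symm_apply, Fin.insertNthEquiv_zero]
      rfl
    rw [LinearEquiv.coe_toLinearMap, hcons, ← Measure.volume_eq_prod]
    exact (volume_preserving_piFinSuccAbove (fun _ : Fin (n + 1) => ℝ) 0).symm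

theorem prekopaLeindler_volume_euclideanSpace (n : ℕ) :
    PrekopaLeindler (volume : Measure (EuclideanSpace ℝ (Fin n))) :=
  (prekopaLeindler_volume_pi n).of_measurePreserving
    (WithLp.linearEquiv 2 ℝ (Fin n → ℝ)).symm.toLinearMap (PiLp.volume_preserving_toLp _)

theorem mul_pow_sub_one_mul_le_of_tendsto {n : ℕ} {a b c : ℝ} {V : ℝ → ℝ} (ha : 0 ≤ a)
    (hb : 0 ≤ b) (hV : ∀ ε > 0, (a + ε * b) ^ n ≤ V ε)
    (hc : Tendsto (fun ε => (V ε - a ^ n) / ε) (𝓝[>] 0) (𝓝 c)) :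
    n * a ^ (n - 1) * b ≤ c := by
  refine ge_of_tendsto hc (eventually_nhdsWithin_of_forall fun ε (hε : 0 < ε) => ?_)
  rw [le_div_iff₀ hε]
  have := pow_add_mul_le_add_pow ha (by positivity : 0 ≤ 2 * a + ε * b) n
  linarith [hV ε hε]

theorem EuclideanSpace.brunn_minkowski_add_smul {n : ℕ} (hn : n ≠ 0)
    {K L : Set (EuclideanSpace ℝ (Fin n))} (hK : IsCompact K) (hKne : K.Nonempty)
    (hL : IsCompact L) (hLne : L.Nonempty) {ε : ℝ} (hε : 0 ≤ ε) :
    ((volume K).toReal ^ (n : ℝ)⁻¹ + ε * (volume L).toReal ^ (n : ℝ)⁻¹) ^ n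
      ≤ (volume (K + ε • L)).toReal := by
  have hdim : Module.finrank ℝ (EuclideanSpace ℝ (Fin n)) = n := finrank_euclideanSpace_fin
  have : Nontrivial (EuclideanSpace ℝ (Fin n)) :=
    Module.nontrivial_of_finrank_pos (R := ℝ) (by omega)
  have hεL : IsCompact (ε • L) := hL.smul ε
  have hBM := (prekopaLeindler_volume_euclideanSpace n).brunn_minkowski hK.measurableSet
    hεL.measurableSet hKne hLne.smul_set (hK.add hεL).measurableSet
    (hK.add hεL).measure_lt_top.ne subset_rfl
  rwa [hdim, Measure.addHaar_smul_of_nonneg _ hε, hdim, ENNReal.toReal_mul,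
    ENNReal.toReal_ofReal (by positivity), Real.mul_rpow (by positivity) ENNReal.toReal_nonneg,
    Real.pow_rpow_inv_natCast hε hn] at hBM

theorem minkowski_mixed_volume_inequality_general (n : ℕ) (hn : 1 ≤ n)
    (K L : Set (EuclideanSpace ℝ (Fin n)))
    (hK : IsCompact K) (hKne : K.Nonempty)
    (hL : IsCompact L) (hLne : L.Nonempty)
    (c : ℝ)
    (hc : Filter.Tendsto
      (fun ε : ℝ => ((volume (K + ε • L)).toReal - (volume K).toReal) / ε)
      (nhdsWithin 0 (Set.Ioi 0)) (nhds c)) :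
    c ^ n ≥ (n : ℝ) ^ n * (volume K).toReal ^ (n - 1) * (volume L).toReal := by
  have hn0 : n ≠ 0 := by omega
  set a := (volume K).toReal ^ (n : ℝ)⁻¹
  set b := (volume L).toReal ^ (n : ℝ)⁻¹
  have ha_pow : a ^ n = (volume K).toReal := Real.rpow_inv_natCast_pow ENNReal.toReal_nonneg hn0
  have hb_pow : b ^ n = (volume L).toReal := Real.rpow_inv_natCast_pow ENNReal.toReal_nonneg hn0
  have hderiv := mul_pow_sub_one_mul_le_of_tendsto (Real.rpow_nonneg ENNReal.toReal_nonneg _)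
    (Real.rpow_nonneg ENNReal.toReal_nonneg _)
    (fun ε hε => EuclideanSpace.brunn_minkowski_add_smul hn0 hK hKne hL hLne hε.le) (ha_pow ▸ hc)
  calc (n : ℝ) ^ n * (volume K).toReal ^ (n - 1) * (volume L).toReal
      = (n * a ^ (n - 1) * b) ^ n := by
        rw [← ha_pow, ← hb_pow, mul_pow, mul_pow, ← pow_mul, ← pow_mul, mul_comm n]
    _ ≤ c ^ n := pow_le_pow_left₀ (by positivity) hderiv n

theorem minkowski_mixed_volume_inequality (n : ℕ) (hn : 1 ≤ n)
    (K L : Set (EuclideanSpace ℝ (Fin n)))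
    (hK : IsCompact K) (hKc : Convex ℝ K) (hKne : K.Nonempty)
    (hL : IsCompact L) (hLc : Convex ℝ L) (hLne : L.Nonempty)
    (c : ℝ)
    (hc : Filter.Tendsto
      (fun ε : ℝ => ((volume (K + ε • L)).toReal - (volume K).toReal) / ε)
      (nhdsWithin 0 (Set.Ioi 0)) (nhds c)) :
    c ^ n ≥ (n : ℝ) ^ n * (volume K).toReal ^ (n - 1) * (volume L).toReal :=
  minkowski_mixed_volume_inequality_general n hn K L hK hKne hL hLne c hc
end

section
/- Let K and L be nonempty compact convex subsets of ℝ². Suppose that for every triangle Δ in ℝ² (the convex hull of three affinely independent points), vol(K + Δ) − vol(K) − vol(Δ) = vol(L + Δ) − vol(L) − vol(Δ). Then K and L are translates: there exists x ∈ ℝ² with L = K + {x}. -/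
/-!
For linearly independent `a, b` in the plane, `a`, `b`, `-(a + b)` are the outer normals of a
triangle `Δ`, scaled by its edge lengths. Writing `h_X` for the support function and
`S_X = h_X a + h_X b + h_X (-(a + b))`, the set `X + t • Δ` lies in the triangle
`{z | ⟪z, u⟫ ≤ t + h_X u}` cut out by these normals, and misses only two-strip parallelograms
of `t`-independent area near its corners; so `vol (X + t • Δ) = (t + S_X / 3)² vol Δ + O(1)`.
The hypothesis makes `vol (K + t • Δ) - vol (L + t • Δ)` constant in `t`, which forces
`S_K = S_L`. Thus `g = h_K - h_L` is positively homogeneous with `g a + g b + g (-(a + b)) = 0`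
for all independent pairs, hence linear, `g = ⟪x, ·⟫`; then `K + {-x}` and `L` are compact
convex sets with the same support function, so they coincide.
-/

open MeasureTheory Pointwise Module
open scoped RealInnerProductSpace

noncomputable section

attribute [local instance] FiniteDimensional.of_fact_finrank_eq_two

variable {E : Type*} [NormedAddCommGroup E] [InnerProductSpace ℝ E]

-- a junk value (`sSup` of an empty or unbounded set) unless `X` is nonempty and bounded
def supportFun (X : Set E) (v : E) : ℝ := sSup ((⟪·, v⟫) '' X)

namespace IsCompact

variable {X : Set E}

theorem bddAbove_image_inner (hX : IsCompact X) (v : E) : BddAbove ((⟪·, v⟫) '' X) :=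
  (hX.image (continuous_id.inner continuous_const)).bddAbove

theorem inner_le_supportFun (hX : IsCompact X) {x : E} (hx : x ∈ X) (v : E) :
    ⟪x, v⟫ ≤ supportFun X v :=
  le_csSup (hX.bddAbove_image_inner v) ⟨x, hx, rfl⟩

theorem exists_inner_eq_supportFun (hX : IsCompact X) (hne : X.Nonempty) (v : E) :
    ∃ x ∈ X, ⟪x, v⟫ = supportFun X v :=
  (hX.image (continuous_id.inner continuous_const)).sSup_mem (hne.image _)

theorem supportFun_add_singleton (hX : IsCompact X) (hne : X.Nonempty) (c v : E) :
    supportFun (X + {c}) v = supportFun X v + ⟪c, v⟫ := by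
  have himage : (⟪·, v⟫) '' (X + {c}) = (· + ⟪c, v⟫) '' ((⟪·, v⟫) '' X) := by
    simp only [Set.add_singleton, Set.image_image, inner_add_left]
  rw [supportFun, himage]
  exact (Monotone.map_csSup_of_continuousAt (f := (· + ⟪c, v⟫)) (by fun_prop)
    (fun _ _ h => by simpa using h) (hne.image _) (hX.bddAbove_image_inner v)).symm

end IsCompact

theorem supportFun_smul (X : Set E) (v : E) {t : ℝ} (ht : 0 ≤ t) :
    supportFun X (t • v) = t * supportFun X v := by
  have himage : (⟪·, t • v⟫) '' X = t • ((⟪·, v⟫) '' X) := by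
    simp only [← Set.image_smul, Set.image_image, real_inner_smul_right, smul_eq_mul]
  rw [supportFun, himage, Real.sSup_smul_of_nonneg ht, smul_eq_mul, supportFun]

theorem sum_supportFun_nonneg {ι : Type*} [Fintype ι] {X : Set E} (hX : IsCompact X)
    (hne : X.Nonempty) {u : ι → E} (hu : ∑ i, u i = 0) : 0 ≤ ∑ i, supportFun X (u i) := by
  obtain ⟨x, hx⟩ := hne
  calc (0 : ℝ) = ∑ i, ⟪x, u i⟫ := by rw [← inner_sum, hu, inner_zero_right]
    _ ≤ ∑ i, supportFun X (u i) := Finset.sum_le_sum fun i _ => hX.inner_le_supportFun hx (u i)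

theorem subset_of_supportFun_le [CompleteSpace E] {A B : Set E} (hA : IsCompact A)
    (hB : IsCompact B) (hBc : Convex ℝ B) (hBne : B.Nonempty)
    (hle : ∀ v, supportFun A v ≤ supportFun B v) : A ⊆ B := by
  intro z hz
  by_contra hzB
  obtain ⟨f, c, hfB, hfz⟩ := geometric_hahn_banach_closed_point hBc hB.isClosed hzB
  set v := (InnerProductSpace.toDual ℝ E).symm f
  have hf : ∀ y, f y = ⟪y, v⟫ := fun y => by
    rw [real_inner_comm, InnerProductSpace.toDual_symm_apply]
  obtain ⟨b, hb, hbv⟩ := hB.exists_inner_eq_supportFun hBne v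
  have hbc : ⟪b, v⟫ < c := hf b ▸ hfB b hb
  have hcz : c < ⟪z, v⟫ := hf z ▸ hfz
  linarith [hle v, hA.inner_le_supportFun hz v]

theorem eq_of_supportFun_eq [CompleteSpace E] {A B : Set E} (hA : IsCompact A) (hAc : Convex ℝ A)
    (hAne : A.Nonempty) (hB : IsCompact B) (hBc : Convex ℝ B) (hBne : B.Nonempty)
    (h : ∀ v, supportFun A v = supportFun B v) : A = B :=
  (subset_of_supportFun_le hA hB hBc hBne fun v => (h v).le).antisymm
    (subset_of_supportFun_le hB hA hAc hAne fun v => (h v).ge)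

/-- Additivity on independent pairs comes from comparing the relation for `(a, a + b)` and
`(2 • a, b)`, which share the third vector; oddness and then additivity on dependent pairs follow
from homogeneity. -/
theorem exists_forall_eq_inner_of_triangle_sum_eq_zero [FiniteDimensional ℝ E]
    (hE : 1 < finrank ℝ E) {g : E → ℝ} (hsmul : ∀ v {t : ℝ}, 0 ≤ t → g (t • v) = t * g v)
    (hrel : ∀ a b, LinearIndependent ℝ ![a, b] → g a + g b + g (-(a + b)) = 0) :
    ∃ x, ∀ v, g v = ⟪x, v⟫ := by
  have hzero : g 0 = 0 := by simpa using hsmul 0 le_rfl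
  have hadd_of_indep : ∀ a b, LinearIndependent ℝ ![a, b] → g (a + b) = g a + g b := by
    intro a b hab
    have h1 := hrel a (a + b) (by simpa using hab)
    have h2 := hrel ((2 : ℝ) • a) b <| by
      simpa using (LinearIndependent.pair_smul_smul_iff (IsUnit.mk0 _ two_ne_zero) isUnit_one).2 hab
    rw [hsmul a zero_le_two, show -((2 : ℝ) • a + b) = -(a + (a + b)) by module] at h2
    linarith
  have hneg : ∀ a, g (-a) = -g a := by
    intro a
    rcases eq_or_ne a 0 with rfl | ha
    · simp [hzero]
    obtain ⟨b, hab⟩ := exists_linearIndependent_pair_of_one_lt_finrank hE ha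
    have h1 := hrel a b hab
    have h2 := hadd_of_indep (-(a + b)) b
      (by rwa [LinearIndependent.pair_neg_left_iff, LinearIndependent.pair_add_left_iff])
    rw [show -(a + b) + b = -a by abel] at h2
    linarith
  have hsmul' : ∀ v (t : ℝ), g (t • v) = t * g v := by
    intro v t
    rcases le_total 0 t with ht | ht
    · exact hsmul v ht
    · rw [← neg_neg t, neg_smul, hneg, hsmul v (neg_nonneg.2 ht)]
      ring
  have hadd : ∀ a b, g (a + b) = g a + g b := by
    intro a b
    by_cases hab : LinearIndependent ℝ ![a, b]
    · exact hadd_of_indep a b hab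
    rcases eq_or_ne b 0 with rfl | hb
    · simp [hzero]
    obtain ⟨s, rfl⟩ : ∃ s : ℝ, s • b = a := by simpa [linearIndependent_fin2, hb] using hab
    rw [show s • b + b = (s + 1) • b by module, hsmul', hsmul', add_mul, one_mul]
  let f : E →ₗ[ℝ] ℝ := { toFun := g, map_add' := hadd, map_smul' := fun t v => hsmul' v t }
  exact ⟨(InnerProductSpace.toDual ℝ E).symm (LinearMap.toContinuousLinearMap f),
    fun v => by rw [InnerProductSpace.toDual_symm_apply]; rfl⟩

section Polyhedral

variable {ι : Type*}

def polyhedralSet (u : ι → E) (h : ι → ℝ) : Set E := {z | ∀ i, ⟪z, u i⟫ ≤ h i}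

def strip (v : E) (α β : ℝ) : Set E := {z | ⟪z, v⟫ ∈ Set.Icc α β}

variable {u : ι → E} {h : ι → ℝ}

theorem convex_polyhedralSet : Convex ℝ (polyhedralSet u h) := by
  intro x hx y hy a b ha hb hab i
  calc ⟪a • x + b • y, u i⟫ = a * ⟪x, u i⟫ + b * ⟪y, u i⟫ := by
        rw [inner_add_left, real_inner_smul_left, real_inner_smul_left]
    _ ≤ a * h i + b * h i := by gcongr <;> [exact hx i; exact hy i]
    _ = h i := by rw [← add_mul, hab, one_mul]

theorem smul_polyhedralSet {t : ℝ} (ht : 0 < t) :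
    t • polyhedralSet u h = polyhedralSet u (fun i => t * h i) := by
  ext z
  simp only [Set.mem_smul_set_iff_inv_smul_mem₀ ht.ne', polyhedralSet, Set.mem_ofPred_eq,
    real_inner_smul_left, inv_mul_le_iff₀ ht]

theorem vadd_polyhedralSet (w : E) :
    w +ᵥ polyhedralSet u h = polyhedralSet u (fun i => h i + ⟪w, u i⟫) := by
  ext z
  simp only [Set.mem_vadd_set_iff_neg_vadd_mem, polyhedralSet, Set.mem_ofPred_eq, vadd_eq_add,
    neg_add_eq_sub, inner_sub_left, sub_le_iff_le_add]

theorem isClosed_strip (v : E) (α β : ℝ) : IsClosed (strip v α β) :=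
  isClosed_Icc.preimage (continuous_id.inner continuous_const)

theorem vadd_strip (w v : E) (α β : ℝ) :
    w +ᵥ strip v α β = strip v (α + ⟪w, v⟫) (β + ⟪w, v⟫) := by
  ext z
  simp only [Set.mem_vadd_set_iff_neg_vadd_mem, strip, Set.mem_ofPred_eq, Set.mem_Icc,
    vadd_eq_add, neg_add_eq_sub, inner_sub_left, sub_le_iff_le_add, le_sub_iff_add_le]

theorem add_smul_polyhedralSet_subset {X : Set E} (hX : IsCompact X) {t : ℝ} (ht : 0 ≤ t) :
    X + t • polyhedralSet u h ⊆ polyhedralSet u (fun i => t * h i + supportFun X (u i)) := by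
  rintro _ ⟨x, hx, _, ⟨y, hy, rfl⟩, rfl⟩ i
  rw [inner_add_left, real_inner_smul_left, add_comm]
  exact add_le_add (mul_le_mul_of_nonneg_left (hy i) ht) (hX.inner_le_supportFun hx (u i))

/-- A point of the outer polyhedron that `X + t • P` misses is, for every facet `j`, within the
width of `X` of some other facet `i`: the point of `X` extremal in direction `u j` fails to
reach it through `t • P` across facet `i`. -/
theorem exists_ne_mem_strip_of_not_mem_add_smul {X : Set E} (hX : IsCompact X)
    (hne : X.Nonempty) {t : ℝ} (ht : 0 < t) {z : E}
    (hz : z ∈ polyhedralSet u (fun i => t * h i + supportFun X (u i)))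
    (hzX : z ∉ X + t • polyhedralSet u h) (j : ι) :
    ∃ i ≠ j, z ∈ strip (u i) (t * h i - supportFun X (-u i)) (t * h i + supportFun X (u i)) := by
  obtain ⟨s, hs, hsj⟩ := hX.exists_inner_eq_supportFun hne (u j)
  have hzs : z - s ∉ polyhedralSet u (fun i => t * h i) := by
    rw [← smul_polyhedralSet ht]
    exact fun hmem => hzX ⟨s, hs, z - s, hmem, add_sub_cancel s z⟩
  simp only [polyhedralSet, Set.mem_ofPred_eq, not_forall, not_le, inner_sub_left] at hzs
  obtain ⟨i, hi⟩ := hzs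
  refine ⟨i, ?_, ?_, hz i⟩
  · rintro rfl
    linarith [hz i]
  · have := hX.inner_le_supportFun hs (-u i)
    rw [inner_neg_right] at this
    linarith

theorem measure_polyhedralSet_pos [MeasurableSpace E] (μ : Measure E) [μ.IsOpenPosMeasure]
    [Finite ι] (hh : ∀ i, 0 < h i) : 0 < μ (polyhedralSet u h) := by
  have hopen : IsOpen {z : E | ∀ i, ⟪z, u i⟫ < h i} := by
    simp only [Set.ofPred_forall]
    exact isOpen_iInter_of_finite fun i => isOpen_lt (by fun_prop) continuous_const
  calc 0 < μ {z : E | ∀ i, ⟪z, u i⟫ < h i} := hopen.measure_pos μ ⟨0, by simpa using hh⟩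
    _ ≤ μ (polyhedralSet u h) := measure_mono fun z hz i => (hz i).le

end Polyhedral

section Plane

variable [Fact (finrank ℝ E = 2)] {a b : E}

theorem eq_of_inner_eq_of_linearIndependent (hab : LinearIndependent ℝ ![a, b]) {x y : E}
    (ha : ⟪x, a⟫ = ⟪y, a⟫) (hb : ⟪x, b⟫ = ⟪y, b⟫) : x = y := by
  refine InnerProductSpace.ext_inner_right_basis
    (basisOfLinearIndependentOfCardEqFinrank hab (by simp [(Fact.out : finrank ℝ E = 2)]))
    fun i => ?_
  fin_cases i <;> simpa

theorem exists_inner_eq_of_linearIndependent (hab : LinearIndependent ℝ ![a, b]) (α β : ℝ) :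
    ∃ w, ⟪w, a⟫ = α ∧ ⟪w, b⟫ = β := by
  set B := basisOfLinearIndependentOfCardEqFinrank hab (by simp [(Fact.out : finrank ℝ E = 2)])
  set w := (InnerProductSpace.toDual ℝ E).symm
    (LinearMap.toContinuousLinearMap (α • B.coord 0 + β • B.coord 1))
  have hw : ∀ i, ⟪w, B i⟫ = ![α, β] i := fun i => by
    rw [InnerProductSpace.toDual_symm_apply]
    fin_cases i <;> simp [Basis.coord_apply]
  exact ⟨w, by simpa [B] using hw 0, by simpa [B] using hw 1⟩

theorem isCompact_strip_inter_strip (hab : LinearIndependent ℝ ![a, b]) (α β γ δ : ℝ) :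
    IsCompact (strip a α β ∩ strip b γ δ) := by
  obtain ⟨p, hpa, hpb⟩ := exists_inner_eq_of_linearIndependent hab 1 0
  obtain ⟨q, hqa, hqb⟩ := exists_inner_eq_of_linearIndependent hab 0 1
  have hcover : strip a α β ∩ strip b γ δ ⊆
      (fun st : ℝ × ℝ => st.1 • p + st.2 • q) '' (Set.Icc α β ×ˢ Set.Icc γ δ) := by
    rintro z ⟨hza, hzb⟩
    refine ⟨(⟪z, a⟫, ⟪z, b⟫), ⟨hza, hzb⟩, eq_of_inner_eq_of_linearIndependent hab ?_ ?_⟩ <;>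
      simp [inner_add_left, real_inner_smul_left, hpa, hpb, hqa, hqb]
  exact ((isCompact_Icc.prod isCompact_Icc).image (by fun_prop)).of_isClosed_subset
    ((isClosed_strip a α β).inter (isClosed_strip b γ δ)) hcover

theorem measure_strip_inter_strip_add [MeasurableSpace E] (μ : Measure E) [μ.IsAddLeftInvariant]
    (hab : LinearIndependent ℝ ![a, b]) (α β γ δ s r : ℝ) :
    μ (strip a (α + s) (β + s) ∩ strip b (γ + r) (δ + r)) = μ (strip a α β ∩ strip b γ δ) := by
  obtain ⟨w, hwa, hwb⟩ := exists_inner_eq_of_linearIndependent hab s r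
  rw [← measure_vadd μ w (strip a α β ∩ _), Set.vadd_set_inter, vadd_strip, vadd_strip, hwa, hwb]

end Plane

section Triangle

def triangleNormals {G : Type*} [AddCommGroup G] (a b : G) : Fin 3 → G := ![a, b, -(a + b)]

theorem sum_triangleNormals {G : Type*} [AddCommGroup G] (a b : G) :
    ∑ i, triangleNormals a b i = 0 := by
  simp [triangleNormals, Fin.sum_univ_three]

variable {a b : E}

theorem linearIndependent_triangleNormals (hab : LinearIndependent ℝ ![a, b]) {i j : Fin 3}
    (hij : i ≠ j) : LinearIndependent ℝ ![triangleNormals a b i, triangleNormals a b j] := by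
  have h02 : LinearIndependent ℝ ![a, -(a + b)] := by
    rwa [LinearIndependent.pair_neg_right_iff, LinearIndependent.pair_add_right_iff]
  have h12 : LinearIndependent ℝ ![b, -(a + b)] := by
    rwa [LinearIndependent.pair_neg_right_iff, add_comm, LinearIndependent.pair_add_right_iff,
      LinearIndependent.pair_symm_iff]
  fin_cases i <;> fin_cases j <;> simp only [triangleNormals] at hij ⊢ <;>
    first
    | exact absurd rfl hij
    | assumption
    | exact LinearIndependent.pair_symm_iff.1 ‹_›

theorem inner_sum_smul_triangleNormals {t : ℝ} {v : Fin 3 → E}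
    (hv : ∀ k i, ⟪v k, triangleNormals a b i⟫ = if k = i then -2 * t else t) (l : Fin 3 → ℝ)
    (i : Fin 3) : ⟪∑ k, l k • v k, triangleNormals a b i⟫ = t * ∑ k, l k - 3 * t * l i := by
  simp only [sum_inner, real_inner_smul_left]
  fin_cases i <;> simp [Fin.sum_univ_three, hv] <;> ring

theorem affineIndependent_of_inner_triangleNormals {t : ℝ} (ht : t ≠ 0) {v : Fin 3 → E}
    (hv : ∀ k i, ⟪v k, triangleNormals a b i⟫ = if k = i then -2 * t else t) :
    AffineIndependent ℝ v := by
  rw [affineIndependent_iff_of_fintype]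
  intro l hl hsum i
  have hi := inner_sum_smul_triangleNormals hv l i
  rw [← Finset.weightedVSub_eq_linear_combination _ hl, hsum, hl, inner_zero_left] at hi
  have : 3 * t * l i = 0 := by linarith
  simpa [ht] using this

variable [Fact (finrank ℝ E = 2)]

theorem exists_inner_triangleNormals_eq (hab : LinearIndependent ℝ ![a, b]) {h : Fin 3 → ℝ}
    (hh : ∑ i, h i = 0) : ∃ w, ∀ i, ⟪w, triangleNormals a b i⟫ = h i := by
  obtain ⟨w, hwa, hwb⟩ := exists_inner_eq_of_linearIndependent hab (h 0) (h 1)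
  refine ⟨w, fun i => ?_⟩
  rw [Fin.sum_univ_three] at hh
  fin_cases i <;> simp [triangleNormals, inner_add_right, hwa, hwb]
  linarith

theorem convexHull_eq_of_inner_triangleNormals (hab : LinearIndependent ℝ ![a, b]) {t : ℝ}
    (ht : 0 < t) {v : Fin 3 → E}
    (hv : ∀ k i, ⟪v k, triangleNormals a b i⟫ = if k = i then -2 * t else t) :
    convexHull ℝ {v 0, v 1, v 2} = polyhedralSet (triangleNormals a b) (fun _ => t) := by
  refine (convexHull_min ?_ convex_polyhedralSet).antisymm fun z hz => ?_
  · rintro _ (rfl | rfl | rfl) i <;> simp only [hv] <;> split_ifs <;> linarith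
  -- barycentric coordinates of `z`
  set l : Fin 3 → ℝ := fun k => (t - ⟪z, triangleNormals a b k⟫) / (3 * t)
  have hz0 : ∑ k, ⟪z, triangleNormals a b k⟫ = 0 := by
    rw [← inner_sum, sum_triangleNormals, inner_zero_right]
  have hl : ∑ k, l k = 1 := by
    simp only [l, ← Finset.sum_div, Finset.sum_sub_distrib, hz0]
    field_simp
    simp
  have hzl : ∑ k, l k • v k = z := by
    have hinner : ∀ i, ⟪∑ k, l k • v k, triangleNormals a b i⟫ = ⟪z, triangleNormals a b i⟫ := by
      intro i
      have : 3 * t * l i = t - ⟪z, triangleNormals a b i⟫ := mul_div_cancel₀ _ (by positivity)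
      rw [inner_sum_smul_triangleNormals hv, hl, this]
      ring
    exact eq_of_inner_eq_of_linearIndependent hab (hinner 0) (hinner 1)
  rw [← hzl]
  refine (convex_convexHull ℝ _).sum_mem (fun k _ => div_nonneg ?_ (by positivity)) hl
    fun k _ => subset_convexHull ℝ _ (by fin_cases k <;> simp)
  linarith [hz k]

theorem exists_affineIndependent_convexHull_eq_smul (hab : LinearIndependent ℝ ![a, b]) {t : ℝ}
    (ht : 0 < t) : ∃ p q r : E, AffineIndependent ℝ ![p, q, r] ∧
      convexHull ℝ {p, q, r} = t • polyhedralSet (triangleNormals a b) 1 := by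
  choose v hv using fun k : Fin 3 => exists_inner_triangleNormals_eq hab
    (h := fun i => if k = i then -2 * t else t)
    (by fin_cases k <;> simp [Fin.sum_univ_three] <;> ring)
  refine ⟨v 0, v 1, v 2, ?_, ?_⟩
  · convert affineIndependent_of_inner_triangleNormals ht.ne' hv
    ext1 k
    fin_cases k <;> rfl
  · rw [convexHull_eq_of_inner_triangleNormals hab ht hv, smul_polyhedralSet ht]
    simp

theorem isCompact_polyhedralSet_triangleNormals (hab : LinearIndependent ℝ ![a, b]) :
    IsCompact (polyhedralSet (triangleNormals a b) 1) := by
  obtain ⟨p, q, r, -, hhull⟩ := exists_affineIndependent_convexHull_eq_smul hab one_pos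
  rw [← one_smul ℝ (polyhedralSet _ _), ← hhull]
  exact (Set.toFinite _).isCompact_convexHull (𝕜 := ℝ)

end Triangle

theorem eq_zero_of_forall_abs_mul_add_le {α β C : ℝ} (h : ∀ t : ℝ, 0 < t → |α * t + β| ≤ C) :
    α = 0 := by
  by_contra hα
  have hC : 0 ≤ C := (abs_nonneg _).trans (h 1 one_pos)
  set t := (C + |β| + 1) / |α|
  have ht : 0 < t := by positivity
  have hαt : |α * t| = C + |β| + 1 := by
    rw [abs_mul, abs_of_pos ht]
    exact mul_div_cancel₀ _ (abs_ne_zero.2 hα)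
  have := abs_sub_abs_le_abs_sub (α * t) (-β)
  rw [abs_neg, sub_neg_eq_add, hαt] at this
  linarith [h t ht]

section Asymptotics

variable [MeasurableSpace E] [BorelSpace E] (μ : Measure E) [μ.IsAddHaarMeasure]
  [Fact (finrank ℝ E = 2)] {a b : E} {X : Set E}

theorem measure_polyhedralSet_triangleNormals (hab : LinearIndependent ℝ ![a, b])
    {h : Fin 3 → ℝ} (hpos : 0 < ∑ i, h i) :
    μ (polyhedralSet (triangleNormals a b) h) =
      ENNReal.ofReal (((∑ i, h i) / 3) ^ 2) * μ (polyhedralSet (triangleNormals a b) 1) := by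
  set s := (∑ i, h i) / 3
  have hs : 0 < s := by positivity
  obtain ⟨w, hw⟩ := exists_inner_triangleNormals_eq hab (h := fun i => h i - s)
    (by simp [Finset.sum_sub_distrib, s]; ring)
  have htranslate : polyhedralSet (triangleNormals a b) h =
      w +ᵥ s • polyhedralSet (triangleNormals a b) 1 := by
    rw [smul_polyhedralSet hs, vadd_polyhedralSet]
    simp [hw]
  rw [htranslate, measure_vadd, Measure.addHaar_smul, (Fact.out : finrank ℝ E = 2),
    abs_of_pos (by positivity)]

theorem measure_polyhedralSet_add_supportFun (hab : LinearIndependent ℝ ![a, b])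
    (hX : IsCompact X) (hne : X.Nonempty) {t : ℝ} (ht : 0 < t) :
    μ (polyhedralSet (triangleNormals a b) (fun i => t + supportFun X (triangleNormals a b i)))
      = ENNReal.ofReal ((t + (∑ i, supportFun X (triangleNormals a b i)) / 3) ^ 2) *
        μ (polyhedralSet (triangleNormals a b) 1) := by
  have hsum : ∑ i, (t + supportFun X (triangleNormals a b i)) =
      3 * t + ∑ i, supportFun X (triangleNormals a b i) := by
    simp [Finset.sum_add_distrib]
  have hS := sum_supportFun_nonneg hX hne (sum_triangleNormals a b)
  rw [measure_polyhedralSet_triangleNormals μ hab (by rw [hsum]; positivity), hsum]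
  congr 3
  ring

theorem measure_add_smul_triangle_le (hab : LinearIndependent ℝ ![a, b]) (hX : IsCompact X)
    (hne : X.Nonempty) {t : ℝ} (ht : 0 < t) :
    μ (X + t • polyhedralSet (triangleNormals a b) 1) ≤
      ENNReal.ofReal ((t + (∑ i, supportFun X (triangleNormals a b i)) / 3) ^ 2) *
        μ (polyhedralSet (triangleNormals a b) 1) := by
  rw [← measure_polyhedralSet_add_supportFun μ hab hX hne ht]
  exact measure_mono (by simpa using add_smul_polyhedralSet_subset (h := 1) hX ht.le)

/-- The outer triangle exceeds `X + t • Δ` only near its corners: by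
`exists_ne_mem_strip_of_not_mem_add_smul`, a missed point lies in two strips of fixed widths
along two different edges, and such parallelograms have measure independent of `t`. -/
theorem exists_measure_le_measure_add_smul_triangle_add (hab : LinearIndependent ℝ ![a, b])
    (hX : IsCompact X) (hne : X.Nonempty) :
    ∃ C ≠ ⊤, ∀ t : ℝ, 0 < t →
      ENNReal.ofReal ((t + (∑ i, supportFun X (triangleNormals a b i)) / 3) ^ 2) *
        μ (polyhedralSet (triangleNormals a b) 1) ≤
      μ (X + t • polyhedralSet (triangleNormals a b) 1) + C := by
  set u := triangleNormals a b
  let P : Fin 3 × Fin 3 → ℝ → Set E := fun p t =>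
    strip (u p.1) (t - supportFun X (-u p.1)) (t + supportFun X (u p.1)) ∩
      strip (u p.2) (t - supportFun X (-u p.2)) (t + supportFun X (u p.2))
  have hP : ∀ p ∈ Finset.univ.offDiag, ∀ t, μ (P p t) = μ (P p 0) := by
    intro p hp t
    have hind := linearIndependent_triangleNormals hab (Finset.mem_offDiag.1 hp).2.2
    convert measure_strip_inter_strip_add μ hind _ _ _ _ t t using 4 <;> ring
  refine ⟨∑ p ∈ Finset.univ.offDiag, μ (P p 0), ENNReal.sum_ne_top.2 fun p hp => ?_, ?_⟩
  · exact (isCompact_strip_inter_strip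
      (linearIndependent_triangleNormals hab (Finset.mem_offDiag.1 hp).2.2) ..).measure_ne_top
  intro t ht
  have hcover : polyhedralSet u (fun i => t + supportFun X (u i)) ⊆
      (X + t • polyhedralSet u 1) ∪ ⋃ p ∈ Finset.univ.offDiag, P p t := by
    intro z hz
    by_cases hzX : z ∈ X + t • polyhedralSet u 1
    · exact Or.inl hzX
    have hz' : z ∈ polyhedralSet u (fun i => t * (1 : Fin 3 → ℝ) i + supportFun X (u i)) := by
      simpa using hz
    obtain ⟨i, -, hzi⟩ := exists_ne_mem_strip_of_not_mem_add_smul hX hne ht hz' hzX 0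
    obtain ⟨j, hji, hzj⟩ := exists_ne_mem_strip_of_not_mem_add_smul hX hne ht hz' hzX i
    simp only [Pi.one_apply, mul_one] at hzi hzj
    exact Or.inr (Set.mem_biUnion (x := (i, j)) (by simpa using hji.symm) ⟨hzi, hzj⟩)
  rw [← measure_polyhedralSet_add_supportFun μ hab hX hne ht]
  calc μ (polyhedralSet u (fun i => t + supportFun X (u i)))
      ≤ μ (X + t • polyhedralSet u 1) + ∑ p ∈ Finset.univ.offDiag, μ (P p t) :=
        (measure_mono hcover).trans
          ((measure_union_le _ _).trans (add_le_add le_rfl (measure_biUnion_finset_le _ _)))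
    _ = μ (X + t • polyhedralSet u 1) + ∑ p ∈ Finset.univ.offDiag, μ (P p 0) := by
        rw [Finset.sum_congr rfl fun p hp => hP p hp t]

theorem exists_abs_measure_add_smul_triangle_sub_le (hab : LinearIndependent ℝ ![a, b])
    (hX : IsCompact X) (hne : X.Nonempty) :
    ∃ C : ℝ, ∀ t : ℝ, 0 < t →
      |(μ (X + t • polyhedralSet (triangleNormals a b) 1)).toReal -
        (t + (∑ i, supportFun X (triangleNormals a b i)) / 3) ^ 2 *
          (μ (polyhedralSet (triangleNormals a b) 1)).toReal| ≤ C := by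
  obtain ⟨C, hC, hlow⟩ := exists_measure_le_measure_add_smul_triangle_add μ hab hX hne
  refine ⟨C.toReal, fun t ht => ?_⟩
  have hΔ := (isCompact_polyhedralSet_triangleNormals hab).measure_ne_top (μ := μ)
  have hup := measure_add_smul_triangle_le μ hab hX hne ht
  have hout : ENNReal.ofReal ((t + (∑ i, supportFun X (triangleNormals a b i)) / 3) ^ 2) *
      μ (polyhedralSet (triangleNormals a b) 1) ≠ ⊤ := ENNReal.mul_ne_top ENNReal.ofReal_ne_top hΔ
  have hfin := ne_top_of_le_ne_top hout hup
  have h1 := ENNReal.toReal_mono hout hup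
  have h2 := ENNReal.toReal_mono (ENNReal.add_ne_top.2 ⟨hfin, hC⟩) (hlow t ht)
  rw [ENNReal.toReal_mul, ENNReal.toReal_ofReal (sq_nonneg _)] at h1 h2
  rw [ENNReal.toReal_add hfin hC] at h2
  rw [abs_sub_le_iff]
  constructor <;> linarith [ENNReal.toReal_nonneg (a := C)]

theorem sum_supportFun_triangleNormals_eq (hab : LinearIndependent ℝ ![a, b]) {K L : Set E}
    (hK : IsCompact K) (hKne : K.Nonempty) (hL : IsCompact L) (hLne : L.Nonempty) (c : ℝ)
    (h : ∀ t : ℝ, 0 < t → (μ (K + t • polyhedralSet (triangleNormals a b) 1)).toReal -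
      (μ (L + t • polyhedralSet (triangleNormals a b) 1)).toReal = c) :
    ∑ i, supportFun K (triangleNormals a b i) = ∑ i, supportFun L (triangleNormals a b i) := by
  obtain ⟨CK, hCK⟩ := exists_abs_measure_add_smul_triangle_sub_le μ hab hK hKne
  obtain ⟨CL, hCL⟩ := exists_abs_measure_add_smul_triangle_sub_le μ hab hL hLne
  set SK := ∑ i, supportFun K (triangleNormals a b i)
  set SL := ∑ i, supportFun L (triangleNormals a b i)
  have hV : 0 < (μ (polyhedralSet (triangleNormals a b) 1)).toReal :=
    ENNReal.toReal_pos (measure_polyhedralSet_pos μ fun _ => one_pos).ne'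
      (isCompact_polyhedralSet_triangleNormals hab).measure_ne_top
  set Δ := polyhedralSet (triangleNormals a b) 1
  set V := (μ Δ).toReal
  have hslope := eq_zero_of_forall_abs_mul_add_le (α := 2 * (SK - SL) / 3 * V)
    (β := ((SK / 3) ^ 2 - (SL / 3) ^ 2) * V - c) (C := CK + CL) fun t ht => by
      have hsplit : 2 * (SK - SL) / 3 * V * t + (((SK / 3) ^ 2 - (SL / 3) ^ 2) * V - c) =
          -(((μ (K + t • Δ)).toReal - (t + SK / 3) ^ 2 * V) -
            ((μ (L + t • Δ)).toReal - (t + SL / 3) ^ 2 * V)) := by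
        linear_combination h t ht
      rw [hsplit, abs_neg]
      exact (abs_sub _ _).trans (add_le_add (hCK t ht) (hCL t ht))
  have : SK - SL = 0 := by simpa [hV.ne'] using hslope
  linarith

end Asymptotics

theorem equal_mixed_areas_with_triangles_implies_translates
    (K L : Set (EuclideanSpace ℝ (Fin 2)))
    (hK : IsCompact K) (hKc : Convex ℝ K) (hKne : K.Nonempty)
    (hL : IsCompact L) (hLc : Convex ℝ L) (hLne : L.Nonempty)
    (h : ∀ p q r : EuclideanSpace ℝ (Fin 2), AffineIndependent ℝ ![p, q, r] →
      (volume (K + convexHull ℝ {p, q, r})).toReal - (volume K).toReal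
          - (volume (convexHull ℝ {p, q, r} : Set (EuclideanSpace ℝ (Fin 2)))).toReal =
        (volume (L + convexHull ℝ {p, q, r})).toReal - (volume L).toReal
          - (volume (convexHull ℝ {p, q, r} : Set (EuclideanSpace ℝ (Fin 2)))).toReal) :
    ∃ x : EuclideanSpace ℝ (Fin 2), L = K + {x} := by
  have : Fact (finrank ℝ (EuclideanSpace ℝ (Fin 2)) = 2) := ⟨finrank_euclideanSpace_fin⟩
  have hrel : ∀ a b : EuclideanSpace ℝ (Fin 2), LinearIndependent ℝ ![a, b] →
      ∑ i, supportFun K (triangleNormals a b i) = ∑ i, supportFun L (triangleNormals a b i) :=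
    fun a b hab => sum_supportFun_triangleNormals_eq volume hab hK hKne hL hLne
      ((volume K).toReal - (volume L).toReal) fun t ht => by
        obtain ⟨p, q, r, hpqr, hhull⟩ := exists_affineIndependent_convexHull_eq_smul hab ht
        have := h p q r hpqr
        rw [hhull] at this
        linarith
  obtain ⟨x, hx⟩ := exists_forall_eq_inner_of_triangle_sum_eq_zero (by simp [Fact.out])
    (g := fun v => supportFun K v - supportFun L v)
    (fun v t ht => by simp only [supportFun_smul _ _ ht]; ring)
    (fun a b hab => by
      have := hrel a b hab
      simp only [triangleNormals, Fin.sum_univ_three, Matrix.cons_val] at this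
      linarith)
  refine ⟨-x, (eq_of_supportFun_eq (hK.add isCompact_singleton) (hKc.add (convex_singleton _))
    (hKne.add (Set.singleton_nonempty _)) hL hLc hLne fun v => ?_).symm⟩
  rw [hK.supportFun_add_singleton hKne, inner_neg_left, ← hx]
  ring
end
end

section
/- Let n ≥ 3, let u₀ ∈ ℝⁿ be a unit vector, and let K and L be nonempty compact convex subsets of ℝⁿ. If the orthogonal projections of K and L onto the hyperplane u^⊥ coincide (K_u = L_u) for every unit vector u orthogonal to u₀, then K = L. -/
/-!
If `x ∈ K \ L`, separate `x` from the closed convex set `L` by a linear functional `f`.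
Since `n ≥ 3`, some unit vector `w` lies in the kernel of both `f` and `⟪·, u₀⟫`. Projecting
along `w` does not change `f`, so the projection of `x` cannot be the projection of a point of `L`,
contradicting `K_w ⊆ L_w`.
-/

noncomputable def projHyperplane {n : ℕ} (u : EuclideanSpace ℝ (Fin n))
    (x : EuclideanSpace ℝ (Fin n)) : EuclideanSpace ℝ (Fin n) :=
  x - (inner ℝ x u : ℝ) • u

theorem exists_norm_eq_one_map_eq_zero_of_finrank_lt {E F : Type*} [NormedAddCommGroup E]
    [InnerProductSpace ℝ E] [FiniteDimensional ℝ E] [AddCommGroup F] [Module ℝ F]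
    [FiniteDimensional ℝ F] (g : E →ₗ[ℝ] F) (hFE : Module.finrank ℝ F < Module.finrank ℝ E) :
    ∃ w : E, ‖w‖ = 1 ∧ g w = 0 := by
  obtain ⟨w, hw, hw0⟩ := Submodule.exists_mem_ne_zero_of_ne_bot (g.ker_ne_bot_of_finrank_lt hFE)
  exact ⟨‖w‖⁻¹ • w, norm_smul_inv_norm hw0, by simp [LinearMap.mem_ker.mp hw]⟩

theorem map_projHyperplane_of_map_eq_zero {n : ℕ} (f : EuclideanSpace ℝ (Fin n) →L[ℝ] ℝ)
    {u : EuclideanSpace ℝ (Fin n)} (hfu : f u = 0) (x : EuclideanSpace ℝ (Fin n)) :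
    f (projHyperplane u x) = f x := by
  simp [projHyperplane, hfu]

theorem subset_of_projHyperplane_image_subset {n : ℕ} (hn : 3 ≤ n)
    (u₀ : EuclideanSpace ℝ (Fin n)) {K L : Set (EuclideanSpace ℝ (Fin n))}
    (hL : IsClosed L) (hLc : Convex ℝ L)
    (h : ∀ u : EuclideanSpace ℝ (Fin n), ‖u‖ = 1 → (inner ℝ u u₀ : ℝ) = 0 →
      projHyperplane u '' K ⊆ projHyperplane u '' L) :
    K ⊆ L := by
  intro x hxK
  by_contra hxL
  obtain ⟨f, s, hfL, hsx⟩ := geometric_hahn_banach_closed_point hLc hL hxL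
  obtain ⟨w, hw, hw0⟩ := exists_norm_eq_one_map_eq_zero_of_finrank_lt
    ((innerₛₗ ℝ u₀).prod (f : EuclideanSpace ℝ (Fin n) →ₗ[ℝ] ℝ))
    (by simp only [Module.finrank_prod, Module.finrank_self, finrank_euclideanSpace_fin]; omega)
  have hwu₀ : inner ℝ w u₀ = (0 : ℝ) := by
    rw [real_inner_comm]
    exact congrArg Prod.fst hw0
  have hfw : f w = 0 := congrArg Prod.snd hw0
  obtain ⟨y, hyL, hyx⟩ := h w hw hwu₀ ⟨x, hxK, rfl⟩
  have hfyx : f y = f x := by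
    rw [← map_projHyperplane_of_map_eq_zero f hfw y, hyx, map_projHyperplane_of_map_eq_zero f hfw]
  linarith [hfL y hyL]

theorem equal_projections_in_directions_orthogonal_to_fixed_vector_general (n : ℕ) (hn : 3 ≤ n)
    (u₀ : EuclideanSpace ℝ (Fin n))
    (K L : Set (EuclideanSpace ℝ (Fin n)))
    (hK : IsCompact K) (hKc : Convex ℝ K)
    (hL : IsCompact L) (hLc : Convex ℝ L)
    (h : ∀ u : EuclideanSpace ℝ (Fin n), ‖u‖ = 1 → (inner ℝ u u₀ : ℝ) = 0 →
      projHyperplane u '' K = projHyperplane u '' L) :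
    K = L :=
  (subset_of_projHyperplane_image_subset hn u₀ hL.isClosed hLc fun u hu hu₀ => (h u hu hu₀).le)
    |>.antisymm
    (subset_of_projHyperplane_image_subset hn u₀ hK.isClosed hKc fun u hu hu₀ => (h u hu hu₀).ge)

theorem equal_projections_in_directions_orthogonal_to_fixed_vector (n : ℕ) (hn : 3 ≤ n)
    (u₀ : EuclideanSpace ℝ (Fin n)) (hu₀ : ‖u₀‖ = 1)
    (K L : Set (EuclideanSpace ℝ (Fin n)))
    (hK : IsCompact K) (hKc : Convex ℝ K) (hKne : K.Nonempty)
    (hL : IsCompact L) (hLc : Convex ℝ L) (hLne : L.Nonempty)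
    (h : ∀ u : EuclideanSpace ℝ (Fin n), ‖u‖ = 1 → (inner ℝ u u₀ : ℝ) = 0 →
      projHyperplane u '' K = projHyperplane u '' L) :
    K = L :=
  equal_projections_in_directions_orthogonal_to_fixed_vector_general n hn u₀ K L hK hKc hL hLc h
end
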